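/- arXiv:1011.5460 — 7 statements merged into one kernel-verified Lean document; each statement's English description precedes it below -/
import Mathlib

section
/- For a k-regular graph G with k ≥ 1, the matrix Q = (2/k)·N_in^T·N_in − I satisfies Q^2 = I. -/
open Matrix Polynomial

variable {V : Type*} [Fintype V] [DecidableEq V]

/-- Head incidence matrix of the symmetric digraph: entry (v, d) is 1 iff v is the head of d. -/
def Nin (G : SimpleGraph V) : Matrix V G.Dart ℝ :=
  Matrix.of fun v d => if d.snd = v then 1 else 0

/-- Tail incidence matrix: entry (v, d) is 1 iff v is the tail of d. -/
def Nout (G : SimpleGraph V) : Matrix V G.Dart ℝ :=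
  Matrix.of fun v d => if d.fst = v then 1 else 0

/-- Arc-reversal permutation matrix. -/
def Prev (G : SimpleGraph V) : Matrix G.Dart G.Dart ℝ :=
  Matrix.of fun d e => if e = d.symm then 1 else 0

/-- Positive support of a matrix. -/
noncomputable def posSupport {m n : Type*} (M : Matrix m n ℝ) : Matrix m n ℝ :=
  Matrix.of fun i j => if 0 < M i j then 1 else 0

/-! For `k`-regular `G` the Gram matrix `N_in N_inᵀ` is `k • 1`, so `M = N_inᵀ N_in` satisfies
`M * M = k • M`: `k⁻¹ • M` is idempotent, and `2 • p - 1` is an involution for any idempotent `p`. -/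

open Finset

theorem smul_sub_one_mul_self_of_mul_self_eq_smul {K A : Type*} [Field K] [Ring A] [Algebra K A]
    {a : A} {c : K} (hc : c ≠ 0) (ha : a * a = c • a) :
    ((2 / c) • a - 1) * ((2 / c) • a - 1) = 1 := by
  have hcoeff : 2 / c * (2 / c) * c = 2 / c + 2 / c := by field_simp; ring
  rw [sub_mul, mul_sub, mul_sub, smul_mul_smul_comm, ha, smul_smul, hcoeff, add_smul]
  simp only [mul_one, one_mul]
  abel

namespace SimpleGraph

variable (G : SimpleGraph V) [DecidableRel G.Adj]

theorem card_dart_snd_eq_degree (v : V) : #{d : G.Dart | d.snd = v} = G.degree v := by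
  rw [← G.dart_fst_fiber_card_eq_degree v]
  exact card_bij' (fun d _ => d.symm) (fun d _ => d.symm) (by simp) (by simp) (by simp) (by simp)

theorem Nin_mul_transpose : Nin G * (Nin G)ᵀ = diagonal fun v => (G.degree v : ℝ) := by
  ext v w
  simp only [mul_apply, transpose_apply, Nin, of_apply, diagonal_apply, mul_ite, mul_one, mul_zero]
  split_ifs with h
  · subst h
    simp only [← ite_and, and_self, sum_boole, card_dart_snd_eq_degree]
  · exact sum_eq_zero fun d _ => by grind

variable {G} in
theorem IsRegularOfDegree.Nin_transpose_mul_mul_self {k : ℕ} (hreg : G.IsRegularOfDegree k) :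
    (Nin G)ᵀ * Nin G * ((Nin G)ᵀ * Nin G) = (k : ℝ) • ((Nin G)ᵀ * Nin G) := by
  have hgram : Nin G * (Nin G)ᵀ = (k : ℝ) • 1 := by
    ext v w
    simp [Nin_mul_transpose, diagonal_apply, one_apply, hreg v]
  rw [Matrix.mul_assoc, ← Matrix.mul_assoc (Nin G), hgram, smul_mul, Matrix.one_mul,
    Matrix.mul_smul]

end SimpleGraph

/-- For a k-regular graph with k ≥ 1, Q = (2/k) N_in^T N_in - I satisfies Q^2 = I. -/
theorem stmt5 (G : SimpleGraph V) [DecidableRel G.Adj] (k : ℕ) (hk : 1 ≤ k)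
    (hreg : G.IsRegularOfDegree k) :
    ((2 / (k : ℝ)) • ((Nin G)ᵀ * Nin G) - 1) * ((2 / (k : ℝ)) • ((Nin G)ᵀ * Nin G) - 1) = 1 :=
  smul_sub_one_mul_self_of_mul_self_eq_smul (Nat.cast_ne_zero.mpr (by omega))
    hreg.Nin_transpose_mul_mul_self
end

section
/- For a k-regular graph G with k ≥ 2, the positive support of the quantum walk transition matrix U = (2/k)·N_out^T·N_in − P equals N_out^T·N_in − P. (The positive support of a matrix M is the 0-1 matrix with entry 1 exactly where M has a positive entry.) -/
/-!
Entry `(d, e)` of `U` is `2/k - 1 ≤ 0` when `e = d.symm`, `2/k > 0` at the other arcs `e` ending at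
the tail of `d`, and `0` elsewhere. So `U` is `c • A - P` with `A`, `P` 0-1 matrices, `P ≤ A`
and `0 < c ≤ 1`, and the positive entries of any such matrix are exactly those of `A - P`.
-/

open Matrix Polynomial

variable {V : Type*} [Fintype V] [DecidableEq V]

theorem posSupport_smul_sub_eq_sub {m n : Type*} {A P : Matrix m n ℝ} {c : ℝ}
    (hA : ∀ i j, A i j = 0 ∨ A i j = 1) (hP : ∀ i j, P i j = 0 ∨ P i j = 1)
    (hPA : ∀ i j, P i j = 1 → A i j = 1) (hc₀ : 0 < c) (hc₁ : c ≤ 1) :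
    posSupport (c • A - P) = A - P := by
  ext i j
  simp only [posSupport, of_apply, Matrix.sub_apply, Matrix.smul_apply, smul_eq_mul]
  rcases hP i j with hPij | hPij
  · rcases hA i j with hAij | hAij <;> simp [hPij, hAij, hc₀]
  · simp [hPij, hPA i j hPij, hc₁]

theorem Nout_transpose_mul_Nin_apply (G : SimpleGraph V) [DecidableRel G.Adj] (d e : G.Dart) :
    ((Nout G)ᵀ * Nin G) d e = if e.snd = d.fst then 1 else 0 := by
  simp [mul_apply, Nout, Nin, eq_comm]

theorem stmt6_general (G : SimpleGraph V) [DecidableRel G.Adj] (k : ℕ) (hk : 2 ≤ k) :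
    posSupport ((2 / (k : ℝ)) • ((Nout G)ᵀ * Nin G) - Prev G) =
      (Nout G)ᵀ * Nin G - Prev G := by
  have hk₀ : (0 : ℝ) < k := by positivity
  refine posSupport_smul_sub_eq_sub (fun d e => ?_) (fun d e => ?_) (fun d e hde => ?_)
    (by positivity) ((div_le_one hk₀).2 (by exact_mod_cast hk))
  · rw [Nout_transpose_mul_Nin_apply]; split_ifs <;> simp
  · simp only [Prev, of_apply]; split_ifs <;> simp
  · have hsymm : e = d.symm := by
      by_contra h
      simp [Prev, h] at hde
    simp [Nout_transpose_mul_Nin_apply, hsymm]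

/-- For a k-regular graph with k ≥ 2, the positive support of the transition matrix
U = (2/k) N_out^T N_in - P equals N_out^T N_in - P. -/
theorem stmt6 (G : SimpleGraph V) [DecidableRel G.Adj] (k : ℕ) (hk : 2 ≤ k)
    (hreg : G.IsRegularOfDegree k) :
    posSupport ((2 / (k : ℝ)) • ((Nout G)ᵀ * Nin G) - Prev G) =
      (Nout G)ᵀ * Nin G - Prev G :=
  stmt6_general G k hk
end

section
/- Let S = N_out^T·N_in − P for a k-regular graph G. Then S·N_in^T = (k−1)·N_out^T. -/
/-!
`Nin Ninᵀ` is the diagonal degree matrix, i.e. `k • 1` for a `k`-regular graph, and reversing an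
arc before taking its head gives its tail, `P Ninᵀ = Noutᵀ`. Hence
`(Noutᵀ Nin - P) Ninᵀ = Noutᵀ (Nin Ninᵀ) - P Ninᵀ = k • Noutᵀ - Noutᵀ`.
-/

open Matrix Polynomial

variable {V : Type*} [Fintype V] [DecidableEq V]

open Finset

lemma SimpleGraph.dart_snd_fiber_card_eq_degree (G : SimpleGraph V) [DecidableRel G.Adj] (v : V) :
    #{d : G.Dart | d.snd = v} = G.degree v := by
  rw [← G.dart_fst_fiber_card_eq_degree v]
  exact card_bij' (fun d _ ↦ d.symm) (fun d _ ↦ d.symm) (by simp) (by simp) (by simp) (by simp)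

lemma Nin_mul_transpose_Nin (G : SimpleGraph V) [DecidableRel G.Adj] :
    Nin G * (Nin G)ᵀ = diagonal fun v ↦ (G.degree v : ℝ) := by
  ext u v
  simp only [Nin, mul_apply, transpose_apply, of_apply, mul_boole, ← ite_and, sum_boole]
  rcases eq_or_ne u v with rfl | huv
  · simp [G.dart_snd_fiber_card_eq_degree]
  · rw [diagonal_apply_ne _ huv, Nat.cast_eq_zero, card_eq_zero, filter_eq_empty_iff]
    rintro d - ⟨rfl, rfl⟩
    exact huv rfl

lemma Prev_mul_transpose_Nin (G : SimpleGraph V) [DecidableRel G.Adj] :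
    Prev G * (Nin G)ᵀ = (Nout G)ᵀ := by
  ext d v
  simp only [Prev, Nin, Nout, mul_apply, transpose_apply, of_apply, boole_mul, sum_ite_eq',
    mem_univ, if_true, SimpleGraph.Dart.symm_toProd, Prod.snd_swap]

/-- For S = N_out^T N_in - P on a k-regular graph, S * N_in^T = (k-1) N_out^T. -/
theorem stmt7 (G : SimpleGraph V) [DecidableRel G.Adj] (k : ℕ)
    (hreg : G.IsRegularOfDegree k) :
    ((Nout G)ᵀ * Nin G - Prev G) * (Nin G)ᵀ = ((k : ℝ) - 1) • (Nout G)ᵀ := by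
  have hdeg : (diagonal fun v ↦ (G.degree v : ℝ)) = (k : ℝ) • 1 := by
    simp [hreg.degree_eq, smul_one_eq_diagonal]
  rw [Matrix.sub_mul, Matrix.mul_assoc, Nin_mul_transpose_Nin, hdeg, Prev_mul_transpose_Nin,
    Matrix.mul_smul, Matrix.mul_one, sub_smul, one_smul]
end

section
/- Let S = N_out^T·N_in − P for a k-regular graph G with adjacency matrix A. Then S·N_out^T = N_out^T·A − N_in^T. -/
open Matrix Polynomial

variable {V : Type*} [Fintype V] [DecidableEq V]

namespace SimpleGraph

lemma sum_dart_ite_toProd_eq {R : Type*} [AddCommMonoidWithOne R] (G : SimpleGraph V)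
    [DecidableRel G.Adj] (p : V × V) :
    ∑ e : G.Dart, (if e.toProd = p then (1 : R) else 0) = if G.Adj p.1 p.2 then 1 else 0 := by
  by_cases h : G.Adj p.1 p.2
  · have toProd_eq_iff (e : G.Dart) : e.toProd = p ↔ e = ⟨p, h⟩ :=
      Dart.toProd_injective.eq_iff (b := ⟨p, h⟩)
    simp_rw [toProd_eq_iff, Finset.sum_ite_eq', Finset.mem_univ, if_true, if_pos h]
  · rw [if_neg h]
    exact Finset.sum_eq_zero fun e _ => if_neg fun (he : e.toProd = p) => h (he ▸ e.adj)

end SimpleGraph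

open SimpleGraph

lemma Nin_mul_transpose_Nout (G : SimpleGraph V) [DecidableRel G.Adj] :
    Nin G * (Nout G)ᵀ = G.adjMatrix ℝ := by
  ext u w
  rw [← transpose_adjMatrix, transpose_apply, adjMatrix_apply, ← G.sum_dart_ite_toProd_eq (w, u)]
  simp only [mul_apply, Nin, Nout, transpose_apply, of_apply, Prod.ext_iff, ← ite_and,
    mul_ite, mul_one, mul_zero]

lemma Prev_mul_transpose_Nout (G : SimpleGraph V) [DecidableRel G.Adj] :
    Prev G * (Nout G)ᵀ = (Nin G)ᵀ := by
  ext d v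
  simp only [mul_apply, Prev, Nout, Nin, transpose_apply, of_apply, ite_mul, one_mul, zero_mul,
    Finset.sum_ite_eq', Finset.mem_univ, if_true]
  rfl

theorem stmt8_general (G : SimpleGraph V) [DecidableRel G.Adj] :
    ((Nout G)ᵀ * Nin G - Prev G) * (Nout G)ᵀ =
      (Nout G)ᵀ * G.adjMatrix ℝ - (Nin G)ᵀ := by
  rw [Matrix.sub_mul, Matrix.mul_assoc, Nin_mul_transpose_Nout, Prev_mul_transpose_Nout]

/-- For S = N_out^T N_in - P on a k-regular graph, S * N_out^T = N_out^T A - N_in^T. -/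
theorem stmt8 (G : SimpleGraph V) [DecidableRel G.Adj] (k : ℕ)
    (hreg : G.IsRegularOfDegree k) :
    ((Nout G)ᵀ * Nin G - Prev G) * (Nout G)ᵀ =
      (Nout G)ᵀ * G.adjMatrix ℝ - (Nin G)ᵀ :=
  stmt8_general G
end

section
/- Let G be a connected k-regular graph on n vertices with k ≥ 2 and S = S^+(U(G)) = N_out^T·N_in − P. The eigenvalues of S are: k−1 with multiplicity 1; for each eigenvalue λ ≠ k of the adjacency matrix A (with multiplicity), the two roots (λ ± √(λ² − 4(k−1)))/2; and additionally +1 with multiplicity n(k−2)/2 + 1 and −1 with multiplicity n(k−2)/2. -/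
/-!
Fix `t ∈ ℂ` with `t ≠ 0` and `c = t² - 1 ≠ 0`. The relations `N_in P = N_out` and `P² = 1` give
the Bass-type factorisation `(t - S)(t - P) = c + N_outᵀ (N_out - t N_in)`, and the
Weinstein–Aronszajn identity moves the correction term to the vertex side, where
`(N_out - t N_in) N_outᵀ = k - t A`. Hence
`det (t - S) · det (t - P) · cⁿ = c^(2|E|) ∏_λ (t² - λ t + k - 1)`. The arc reversal `P` is
conjugate to `-P` by the diagonal sign matrix of an edge orientation, which forces
`det (t - P) = c^|E|`; the eigenvalue `λ = k` of `A` contributes `(t - 1)(t - (k - 1))`.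
Both sides of the claimed identity are polynomials agreeing at all but three points.
-/

open Matrix Polynomial

variable {V : Type*} [Fintype V] [DecidableEq V]

/-- Head incidence matrix of the symmetric digraph, over the complex numbers. -/
def NinC (G : SimpleGraph V) : Matrix V G.Dart ℂ :=
  Matrix.of fun v d => if d.snd = v then 1 else 0

/-- Tail incidence matrix, over the complex numbers. -/
def NoutC (G : SimpleGraph V) : Matrix V G.Dart ℂ :=
  Matrix.of fun v d => if d.fst = v then 1 else 0

/-- Arc-reversal permutation matrix, over the complex numbers. -/
def PrevC (G : SimpleGraph V) : Matrix G.Dart G.Dart ℂ :=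
  Matrix.of fun d e => if e = d.symm then 1 else 0

namespace Matrix

variable {m n R : Type*} [Fintype n] [DecidableEq n]

theorem det_smul_one_add_mul_comm [Fintype m] [DecidableEq m] [CommRing R] (c : R)
    (U : Matrix m n R) (W : Matrix n m R) :
    c ^ Fintype.card n * (c • 1 + U * W).det = c ^ Fintype.card m * (c • 1 + W * U).det := by
  simpa [eval_charpoly, scalar_apply, smul_one_eq_diagonal, sub_eq_add_neg] using
    congrArg (eval c) (charpoly_mul_comm' (-U) W)

theorem det_smul_one_sub_smul_eq_prod_roots [Field R] {A : Matrix n n R} (hA : A.charpoly.Splits)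
    (a : R) {t : R} (ht : t ≠ 0) :
    (a • 1 - t • A).det = (A.charpoly.roots.map fun l => a - t * l).prod := by
  have hscale : a • 1 - t • A = t • (scalar n (a / t) - A) := by
    rw [smul_sub, scalar_apply, ← smul_one_eq_diagonal, smul_smul, mul_div_cancel₀ _ ht]
  have hcard : A.charpoly.roots.card = Fintype.card n := by
    rw [splits_iff_card_roots.mp hA, charpoly_natDegree_eq_dim]
  rw [hscale, det_smul, ← eval_charpoly]
  conv_lhs => rw [hA.eq_prod_roots_of_monic A.charpoly_monic]
  rw [eval_multiset_prod, Multiset.map_map, ← hcard, ← Multiset.prod_replicate,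
    ← Multiset.map_const', ← Multiset.prod_map_mul]
  congr 1
  refine Multiset.map_congr rfl fun l _ => ?_
  simp only [Function.comp_apply, eval_sub, eval_X, eval_C]
  field_simp

section Bass

variable [Fintype m] [CommRing R] {Nin Nout : Matrix m n R} {P : Matrix n n R}

theorem smul_one_sub_mul_smul_one_sub (hP : Nin * P = Nout) (hPP : P * P = 1) (t : R) :
    (t • 1 - (Noutᵀ * Nin - P)) * (t • 1 - P) = (t ^ 2 - 1) • 1 + Noutᵀ * (Nout - t • Nin) := by
  simp only [Matrix.sub_mul, Matrix.mul_sub, Matrix.smul_mul, Matrix.mul_smul, Matrix.one_mul,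
    Matrix.mul_one, Matrix.mul_assoc, hP, hPP]
  module

theorem det_smul_one_sub_mul_det_smul_one_sub [DecidableEq m] (hP : Nin * P = Nout)
    (hPP : P * P = 1) {k : R} (hk : Nout * Noutᵀ = k • 1) (t : R) :
    (t • 1 - (Noutᵀ * Nin - P)).det * (t • 1 - P).det * (t ^ 2 - 1) ^ Fintype.card m =
      (t ^ 2 - 1) ^ Fintype.card n * ((t ^ 2 - 1 + k) • 1 - t • (Nin * Noutᵀ)).det := by
  rw [← det_mul, smul_one_sub_mul_smul_one_sub hP hPP, mul_comm, det_smul_one_add_mul_comm,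
    Matrix.sub_mul, hk, Matrix.smul_mul, add_smul]
  congr 2
  abel

end Bass

theorem charpoly_sq_of_mul_self_eq_one_of_conj_eq_neg [CommRing R] {P D : Matrix n n R}
    (hP : P * P = 1) (hD : D * D = 1) (hDP : D * P * D = -P) :
    P.charpoly ^ 2 = (X ^ 2 - 1) ^ Fintype.card n := by
  set P' := C.mapMatrix P
  set D' := C.mapMatrix D
  have hP' : P' * P' = 1 := by rw [← map_mul, hP, map_one]
  have hD' : D' * D' = 1 := by rw [← map_mul, hD, map_one]
  have hDP' : D' * P' * D' = -P' := by rw [← map_mul, ← map_mul, hDP, map_neg]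
  have hconj : D' * ((X : R[X]) • 1 + P') * D' = (X : R[X]) • 1 - P' := by
    rw [Matrix.mul_add, Matrix.add_mul, hDP', Matrix.mul_smul, Matrix.mul_one, Matrix.smul_mul,
      hD', sub_eq_add_neg]
  have hdetD : D'.det * D'.det = 1 := by rw [← det_mul, hD', det_one]
  have hplus : ((X : R[X]) • 1 + P').det = ((X : R[X]) • 1 - P').det := by
    rw [← hconj, det_mul, det_mul]
    linear_combination (-((X : R[X]) • 1 + P').det) * hdetD
  have hcharpoly : P.charpoly = ((X : R[X]) • 1 - P').det := by
    rw [charpoly, charmatrix, scalar_apply, smul_one_eq_diagonal]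
  have hprod : ((X : R[X]) • 1 - P') * ((X : R[X]) • 1 + P') = (X ^ 2 - 1 : R[X]) • 1 := by
    simp only [Matrix.sub_mul, Matrix.mul_add, Matrix.smul_mul, Matrix.mul_smul, Matrix.one_mul,
      Matrix.mul_one, hP']
    module
  rw [hcharpoly, sq]
  nth_rewrite 2 [← hplus]
  rw [← det_mul, hprod, det_smul, det_one, mul_one]

end Matrix

theorem Polynomial.Monic.eq_of_sq_eq_sq {R : Type*} [CommRing R] [IsDomain R] [NeZero (2 : R)]
    {p q : R[X]} (hp : p.Monic) (hq : q.Monic) (h : p ^ 2 = q ^ 2) : p = q := by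
  refine (sq_eq_sq_iff_eq_or_eq_neg.mp h).resolve_right fun hpq => ?_
  have := congrArg Polynomial.leadingCoeff hpq
  rw [leadingCoeff_neg, hp.leadingCoeff, hq.leadingCoeff] at this
  have h2 : (2 : R) = 0 := by linear_combination this
  exact two_ne_zero h2

namespace SimpleGraph

variable (G : SimpleGraph V) [DecidableRel G.Adj]

theorem NinC_mul_transpose_NoutC : NinC G * (NoutC G)ᵀ = G.adjMatrix ℂ := by
  ext u v
  simp only [mul_apply, NinC, NoutC, transpose_apply, of_apply, ite_zero_mul_ite_zero, mul_one,
    adjMatrix_apply]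
  by_cases h : G.Adj u v
  · rw [Fintype.sum_eq_single ⟨(v, u), h.symm⟩]
    · simp [h]
    · intro d hd
      rw [if_neg]
      rintro ⟨rfl, rfl⟩
      exact hd rfl
  · rw [if_neg h]
    refine Finset.sum_eq_zero fun d _ => if_neg ?_
    rintro ⟨rfl, rfl⟩
    exact h d.adj.symm

theorem NoutC_mul_transpose_NoutC {k : ℕ} (hreg : G.IsRegularOfDegree k) :
    NoutC G * (NoutC G)ᵀ = (k : ℂ) • 1 := by
  ext u v
  simp only [mul_apply, NoutC, transpose_apply, of_apply, ite_zero_mul_ite_zero, mul_one,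
    Matrix.smul_apply, one_apply, smul_eq_mul]
  by_cases h : u = v
  · subst h
    simp only [and_self, if_true, mul_one]
    rw [Finset.sum_boole, dart_fst_fiber_card_eq_degree, hreg u]
  · rw [if_neg h, mul_zero]
    refine Finset.sum_eq_zero fun d _ => if_neg ?_
    rintro ⟨rfl, rfl⟩
    exact h rfl

theorem NinC_mul_PrevC : NinC G * PrevC G = NoutC G := by
  ext v d
  simp only [mul_apply, NinC, NoutC, PrevC, of_apply, mul_ite, mul_one, mul_zero]
  rw [Fintype.sum_eq_single d.symm]
  · simp
  · intro e he
    rw [if_neg]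
    rintro rfl
    exact he (Dart.symm_symm e).symm

theorem PrevC_mul_PrevC : PrevC G * PrevC G = 1 := by
  ext d f
  simp only [mul_apply, PrevC, of_apply, mul_ite, mul_one, mul_zero, one_apply]
  rw [Fintype.sum_eq_single d.symm]
  · simp [eq_comm]
  · intro e he
    rw [if_neg he]
    simp

theorem exists_mul_self_eq_one_conj_PrevC_eq_neg :
    ∃ D : Matrix G.Dart G.Dart ℂ, D * D = 1 ∧ D * PrevC G * D = -PrevC G := by
  let o := Fintype.equivFin V
  let s : G.Dart → ℂ := fun d => if o d.fst < o d.snd then 1 else -1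
  have hsq : ∀ d, s d * s d = 1 := fun d => by dsimp only [s]; split_ifs <;> norm_num
  have hsymm : ∀ d : G.Dart, s d * s d.symm = -1 := by
    intro d
    rcases (o.injective.ne d.fst_ne_snd).lt_or_gt with h | h
    · simp [s, Dart.symm, h, h.not_gt]
    · simp [s, Dart.symm, h, h.not_gt]
  refine ⟨diagonal s, by rw [diagonal_mul_diagonal, funext hsq, diagonal_one], ?_⟩
  ext d f
  simp only [diagonal_mul, mul_diagonal, PrevC, Matrix.neg_apply, of_apply]
  split_ifs with h
  · subst h
    linear_combination hsymm d
  · simp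

theorem isRoot_charpoly_adjMatrix {K : Type*} [Field K] [Nonempty V] {k : ℕ}
    (hreg : G.IsRegularOfDegree k) : (G.adjMatrix K).charpoly.IsRoot k := by
  rw [IsRoot.def, eval_charpoly, ← exists_mulVec_eq_zero_iff]
  refine ⟨Function.const V 1, fun h => one_ne_zero (congrFun h (Classical.arbitrary V)), ?_⟩
  ext v
  simp [sub_mulVec, hreg v]

theorem charpoly_PrevC : (PrevC G).charpoly = (X ^ 2 - 1) ^ G.edgeFinset.card := by
  obtain ⟨D, hD, hDP⟩ := G.exists_mul_self_eq_one_conj_PrevC_eq_neg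
  have hmonic : ((X ^ 2 - 1 : ℂ[X]) ^ G.edgeFinset.card).Monic :=
    (by simpa using monic_X_pow_sub_C (1 : ℂ) two_ne_zero : (X ^ 2 - 1 : ℂ[X]).Monic).pow _
  refine (PrevC G).charpoly_monic.eq_of_sq_eq_sq hmonic ?_
  rw [charpoly_sq_of_mul_self_eq_one_of_conj_eq_neg G.PrevC_mul_PrevC hD hDP,
    dart_card_eq_twice_card_edges, ← pow_mul']

theorem eval_charpoly_eq {k e : ℕ} (hreg : G.IsRegularOfDegree k)
    (he : Fintype.card G.Dart = e + G.edgeFinset.card + Fintype.card V) {z : ℂ} (hz : z ≠ 0)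
    (hz1 : z ^ 2 ≠ 1) :
    ((NoutC G)ᵀ * NinC G - PrevC G).charpoly.eval z =
      (z ^ 2 - 1) ^ e *
        ((G.adjMatrix ℂ).charpoly.roots.map fun l => z ^ 2 - l * z + (k - 1)).prod := by
  have hc : z ^ 2 - 1 ≠ 0 := sub_ne_zero.mpr hz1
  have hP := eval_charpoly (PrevC G) z
  rw [charpoly_PrevC, eval_pow, eval_sub, eval_pow, eval_X, eval_one, scalar_apply,
    ← smul_one_eq_diagonal] at hP
  rw [eval_charpoly, scalar_apply, ← smul_one_eq_diagonal]
  apply mul_right_cancel₀ (mul_ne_zero (pow_ne_zero G.edgeFinset.card hc) (pow_ne_zero _ hc))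
  calc _ = (z • 1 - ((NoutC G)ᵀ * NinC G - PrevC G)).det * (z • 1 - PrevC G).det *
        (z ^ 2 - 1) ^ Fintype.card V := by rw [← hP, mul_assoc]
    _ = (z ^ 2 - 1) ^ Fintype.card G.Dart * ((z ^ 2 - 1 + k) • 1 - z • G.adjMatrix ℂ).det := by
      rw [det_smul_one_sub_mul_det_smul_one_sub G.NinC_mul_PrevC G.PrevC_mul_PrevC
        (G.NoutC_mul_transpose_NoutC hreg), G.NinC_mul_transpose_NoutC]
    _ = _ := by
      have hfactor (l : ℂ) : z ^ 2 - 1 + k - z * l = z ^ 2 - l * z + (k - 1) := by ring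
      rw [det_smul_one_sub_smul_eq_prod_roots (IsAlgClosed.splits _) _ hz, he, pow_add, pow_add,
        Multiset.map_congr rfl fun l _ => hfactor l]
      ring

end SimpleGraph

/-- Spectrum of S⁺(U) = N_out^T N_in - P for a connected k-regular graph on n vertices,
k ≥ 2: eigenvalue k-1 with multiplicity 1; the two roots of x² - λx + (k-1) for each
eigenvalue λ ≠ k of A (with multiplicity); +1 with multiplicity n(k-2)/2 + 1 and -1 with
multiplicity n(k-2)/2.  Stated via the characteristic polynomial. -/
theorem stmt15 (G : SimpleGraph V) [DecidableRel G.Adj] (k : ℕ) (hk : 2 ≤ k)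
    (hreg : G.IsRegularOfDegree k) (hconn : G.Connected)
    (μ : Multiset ℂ) (hμ : μ = ((G.adjMatrix ℂ).charpoly.roots).erase (k : ℂ)) :
    ((NoutC G)ᵀ * NinC G - PrevC G).charpoly =
      (X - C ((k : ℂ) - 1)) *
        (μ.map (fun l => X ^ 2 - C l * X + C ((k : ℂ) - 1))).prod *
        (X - 1) ^ (Fintype.card V * (k - 2) / 2 + 1) *
        (X + 1) ^ (Fintype.card V * (k - 2) / 2) := by
  have := hconn.nonempty
  set e := Fintype.card V * (k - 2) / 2
  have hdarts : Fintype.card G.Dart = e + G.edgeFinset.card + Fintype.card V := by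
    have h2E := G.dart_card_eq_twice_card_edges
    have hnk : Fintype.card G.Dart = Fintype.card V * k := by
      simp [G.dart_card_eq_sum_degrees, hreg _, mul_comm]
    have : Fintype.card V * (k - 2) + 2 * Fintype.card V = Fintype.card V * k := by
      rw [mul_comm 2, ← mul_add, Nat.sub_add_cancel hk]
    omega
  have hroots : (G.adjMatrix ℂ).charpoly.roots = (k : ℂ) ::ₘ μ := by
    rw [hμ, Multiset.cons_erase]
    exact (mem_roots (charpoly_monic _).ne_zero).mpr (G.isRoot_charpoly_adjMatrix hreg)
  refine eq_of_infinite_eval_eq _ _ <|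
    (Set.toFinite {0, 1, -1}).infinite_compl.mono fun z hz => ?_
  obtain ⟨hz0, hz1, hzm1⟩ : z ≠ 0 ∧ z ≠ 1 ∧ z ≠ -1 := by simpa [not_or] using hz
  rw [Set.mem_ofPred_eq, G.eval_charpoly_eq hreg hdarts hz0 (by simp [hz1, hzm1]), hroots,
    Multiset.map_cons, Multiset.prod_cons]
  simp only [eval_mul, eval_pow, eval_sub, eval_add, eval_X, eval_C, eval_one, eval_multiset_prod,
    Multiset.map_map, Function.comp_def]
  rw [show z ^ 2 - 1 = (z - 1) * (z + 1) by ring, mul_pow]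
  ring
end

section
/- For a k-regular graph G with k > 2, S^+(U²) = (S^+(U))² + I, where U is the quantum walk transition matrix. -/
/-!
Write `a = 2/k`, so `0 < a < 1`. The entry `U d e` vanishes unless the arc `e` ends where `d`
starts, and then equals `a - [e = d.symm]`. Hence `(U²) d f` has at most one nonzero term, coming
from the arc `f.snd → d.fst`; it equals `(a - [f.snd = d.snd]) * (a - [f.fst = d.fst])`, which is
positive exactly when both brackets agree. Both brackets being `1` means `d = f`, giving the `I`;
both being `0` is exactly the condition for the corresponding term of `S⁺(U)²` to be `1`.
-/

open Matrix Polynomial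

variable {V : Type*} [Fintype V] [DecidableEq V]

lemma sub_ite_mul_sub_ite_pos_iff {a : ℝ} (ha₀ : 0 < a) (ha₁ : a < 1) (p q : Prop) [Decidable p]
    [Decidable q] : 0 < (a - if p then 1 else 0) * (a - if q then 1 else 0) ↔ (p ↔ q) := by
  by_cases hp : p <;> by_cases hq : q <;> simp [hp, hq] <;> nlinarith

lemma posSupport_apply_eq_zero {m n : Type*} {M : Matrix m n ℝ} {i : m} {j : n}
    (h : M i j = 0) : posSupport M i j = 0 := by
  simp [posSupport, h]

lemma transpose_Nout_mul_Nin_apply {G : SimpleGraph V} (d e : G.Dart) :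
    ((Nout G)ᵀ * Nin G) d e = if e.snd = d.fst then 1 else 0 := by
  simp [mul_apply, Nout, Nin, eq_comm]

variable {G : SimpleGraph V} [DecidableRel G.Adj]

noncomputable def walkMatrix (G : SimpleGraph V) [DecidableRel G.Adj] (a : ℝ) :
    Matrix G.Dart G.Dart ℝ :=
  a • ((Nout G)ᵀ * Nin G) - Prev G

/-- Only the arc `f.snd → d.fst` contributes: the middle arc of a path `f, e, d` is determined by
its ends. -/
lemma mul_apply_of_consecutive {M N : Matrix G.Dart G.Dart ℝ}
    (hM : ∀ d e, e.snd ≠ d.fst → M d e = 0) (hN : ∀ d e, e.snd ≠ d.fst → N d e = 0)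
    (d f : G.Dart) :
    (M * N) d f = if h : G.Adj f.snd d.fst
      then M d ⟨(f.snd, d.fst), h⟩ * N ⟨(f.snd, d.fst), h⟩ f else 0 := by
  have hterm : ∀ e : G.Dart, e.toProd ≠ (f.snd, d.fst) → M d e * N e f = 0 := by
    intro e he
    by_cases hd : e.snd = d.fst
    · rw [hN e f fun h => he (Prod.ext h.symm hd), mul_zero]
    · rw [hM d e hd, zero_mul]
  rw [mul_apply]
  split_ifs with hadj
  · refine Fintype.sum_eq_single _ fun e he => hterm e fun h => he ?_
    exact SimpleGraph.Dart.ext _ _ h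
  · refine Finset.sum_eq_zero fun e _ => hterm e fun h => hadj ?_
    obtain ⟨⟨u, v⟩, huv⟩ := e
    obtain ⟨rfl, rfl⟩ := Prod.ext_iff.1 h
    exact huv

variable {a : ℝ}

lemma walkMatrix_apply (d e : G.Dart) :
    walkMatrix G a d e = if e.snd = d.fst then a - if e = d.symm then 1 else 0 else 0 := by
  have hsymm : e = d.symm → e.snd = d.fst := fun h => h ▸ rfl
  simp only [walkMatrix, Matrix.sub_apply, Matrix.smul_apply, transpose_Nout_mul_Nin_apply, Prev,
    of_apply, smul_eq_mul]
  split_ifs <;> simp_all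

lemma walkMatrix_apply_eq_zero {d e : G.Dart} (h : e.snd ≠ d.fst) : walkMatrix G a d e = 0 := by
  rw [walkMatrix_apply, if_neg h]

lemma posSupport_walkMatrix_apply (ha₀ : 0 < a) (ha₁ : a < 1) (d e : G.Dart) :
    posSupport (walkMatrix G a) d e = if e.snd = d.fst ∧ e ≠ d.symm then 1 else 0 := by
  simp only [posSupport, of_apply, walkMatrix_apply]
  by_cases h₁ : e.snd = d.fst <;> by_cases h₂ : e = d.symm <;> simp [*, not_lt_of_gt ha₁]

lemma walkMatrix_mul_self_apply (d f : G.Dart) :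
    (walkMatrix G a * walkMatrix G a) d f = if G.Adj f.snd d.fst then
      (a - if f.snd = d.snd then 1 else 0) * (a - if f.fst = d.fst then 1 else 0) else 0 := by
  rw [mul_apply_of_consecutive (fun _ _ => walkMatrix_apply_eq_zero)
    (fun _ _ => walkMatrix_apply_eq_zero)]
  by_cases hadj : G.Adj f.snd d.fst <;>
    simp [hadj, walkMatrix_apply, SimpleGraph.Dart.ext_iff, Prod.ext_iff]

lemma posSupport_walkMatrix_mul_self_apply (ha₀ : 0 < a) (ha₁ : a < 1) (d f : G.Dart) :
    (posSupport (walkMatrix G a) * posSupport (walkMatrix G a)) d f =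
      if G.Adj f.snd d.fst ∧ f.snd ≠ d.snd ∧ f.fst ≠ d.fst then 1 else 0 := by
  have hS : ∀ d e : G.Dart, e.snd ≠ d.fst → posSupport (walkMatrix G a) d e = 0 :=
    fun _ _ h => posSupport_apply_eq_zero (walkMatrix_apply_eq_zero h)
  rw [mul_apply_of_consecutive hS hS]
  by_cases hadj : G.Adj f.snd d.fst
  · by_cases hP : f.snd = d.snd <;> by_cases hQ : f.fst = d.fst <;>
      simp [hadj, hP, hQ, posSupport_walkMatrix_apply ha₀ ha₁, SimpleGraph.Dart.ext_iff, Prod.ext_iff]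
  · simp [hadj]

theorem posSupport_walkMatrix_mul_self (ha₀ : 0 < a) (ha₁ : a < 1) :
    posSupport (walkMatrix G a * walkMatrix G a) =
      posSupport (walkMatrix G a) * posSupport (walkMatrix G a) + 1 := by
  ext d f
  have hdf : d = f ↔ G.Adj f.snd d.fst ∧ f.snd = d.snd ∧ f.fst = d.fst := by
    constructor
    · rintro rfl
      exact ⟨d.adj.symm, rfl, rfl⟩
    · rintro ⟨-, h₂, h₁⟩
      exact SimpleGraph.Dart.ext _ _ (Prod.ext h₁.symm h₂.symm)
  have hpos : 0 < (walkMatrix G a * walkMatrix G a) d f ↔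
      G.Adj f.snd d.fst ∧ (f.snd = d.snd ↔ f.fst = d.fst) := by
    rw [walkMatrix_mul_self_apply]
    by_cases hadj : G.Adj f.snd d.fst
    · rw [if_pos hadj, sub_ite_mul_sub_ite_pos_iff ha₀ ha₁, and_iff_right hadj]
    · simp [hadj]
  rw [Matrix.add_apply, posSupport_walkMatrix_mul_self_apply ha₀ ha₁, one_apply]
  simp only [posSupport, of_apply, hpos, hdf]
  by_cases hadj : G.Adj f.snd d.fst <;> by_cases hP : f.snd = d.snd <;>
    by_cases hQ : f.fst = d.fst <;> simp [hadj, hP, hQ]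

theorem stmt16_general (G : SimpleGraph V) [DecidableRel G.Adj] (k : ℕ) (hk : 2 < k)
    (U : Matrix G.Dart G.Dart ℝ)
    (hU : U = (2 / (k : ℝ)) • ((Nout G)ᵀ * Nin G) - Prev G) :
    posSupport (U * U) = posSupport U * posSupport U + 1 := by
  have hk₀ : (0 : ℝ) < k := Nat.cast_pos.2 (by omega)
  have ha₁ : 2 / (k : ℝ) < 1 := (div_lt_one hk₀).2 (by exact_mod_cast hk)
  subst hU
  exact posSupport_walkMatrix_mul_self (by positivity) ha₁

/-- For a k-regular graph with k > 2, S⁺(U²) = (S⁺(U))² + I. -/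
theorem stmt16 (G : SimpleGraph V) [DecidableRel G.Adj] (k : ℕ) (hk : 2 < k)
    (hreg : G.IsRegularOfDegree k)
    (U : Matrix G.Dart G.Dart ℝ)
    (hU : U = (2 / (k : ℝ)) • ((Nout G)ᵀ * Nin G) - Prev G) :
    posSupport (U * U) = posSupport U * posSupport U + 1 :=
  stmt16_general G k hk U hU
end

section
/- For a k-regular graph G with k > 2, the entrywise identity S^+(U²) = (N_out^T·N_in)² − N_out^T·N_out − N_in^T·N_in + 2I holds, where the negative entries of U² occur exactly at pairs of arcs sharing the same head but not the same tail, or the same tail but not the same head. -/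
/-!
Write `A = N_outᵀ N_in` (so `A d e = 1` iff `e` ends where `d` starts) and `P` for arc reversal.
Since `A P = N_outᵀ N_out`, `P A = N_inᵀ N_in` and `P² = 1`, for `U = s A - P` we get
`U² = s² A² - s N_outᵀ N_out - s N_inᵀ N_in + 1`, and `A² d e = 1` iff `d.fst ~ e.snd`.
Two distinct arcs sharing a tail (or a head) always have `d.fst ~ e.snd`, so the entries of `U²`
are `(1 - s)²` on the diagonal, `s (s - 1)` for arcs sharing exactly one endpoint, and `s²` or `0`
otherwise. For `s = 2 / k ∈ (0, 1)` the signs of these entries give both claims.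
-/

open Matrix Polynomial

variable {V : Type*} [Fintype V] [DecidableEq V]

namespace SimpleGraph

variable {G : SimpleGraph V}

lemma transpose_Nout_mul_apply {n : Type*} (M : Matrix V n ℝ) (d : G.Dart) (j : n) :
    ((Nout G)ᵀ * M) d j = M d.fst j := by
  simp [Matrix.mul_apply, Nout]

lemma transpose_Nin_mul_apply {n : Type*} (M : Matrix V n ℝ) (d : G.Dart) (j : n) :
    ((Nin G)ᵀ * M) d j = M d.snd j := by
  simp [Matrix.mul_apply, Nin]

lemma mul_Nin_apply {m : Type*} (M : Matrix m V ℝ) (i : m) (e : G.Dart) :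
    (M * Nin G) i e = M i e.snd := by
  simp [Matrix.mul_apply, Nin]

lemma transpose_Nout_mul_Nout_apply (d e : G.Dart) :
    ((Nout G)ᵀ * Nout G) d e = if d.fst = e.fst then 1 else 0 := by
  rw [transpose_Nout_mul_apply]
  simp [Nout, eq_comm]

lemma transpose_Nin_mul_Nin_apply (d e : G.Dart) :
    ((Nin G)ᵀ * Nin G) d e = if d.snd = e.snd then 1 else 0 := by
  rw [transpose_Nin_mul_apply]
  simp [Nin, eq_comm]

variable [DecidableRel G.Adj]

lemma Nin_mul_transpose_Nout : Nin G * (Nout G)ᵀ = G.adjMatrix ℝ := by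
  ext v w
  rw [Matrix.mul_apply, adjMatrix_apply]
  split_ifs with h
  · rw [Fintype.sum_eq_single (⟨(w, v), h.symm⟩ : G.Dart)]
    · simp [Nin, Nout]
    · intro f hf
      have : ¬ (f.fst = w ∧ f.snd = v) := fun ⟨h1, h2⟩ => hf (Dart.ext _ _ (Prod.ext h1 h2))
      simp_all [Nin, Nout]
  · refine Fintype.sum_eq_zero _ fun f => ?_
    simp only [Nin, Nout, transpose_apply, of_apply, mul_ite, mul_one, mul_zero, ite_eq_right_iff]
    rintro rfl rfl
    exact absurd f.adj.symm h

lemma mul_Prev_apply {m : Type*} (M : Matrix m G.Dart ℝ) (i : m) (e : G.Dart) :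
    (M * Prev G) i e = M i e.symm := by
  simp [Matrix.mul_apply, Prev, eq_comm (a := e), Dart.symm_involutive.eq_iff]

lemma Prev_mul_apply {n : Type*} (M : Matrix G.Dart n ℝ) (d : G.Dart) (j : n) :
    (Prev G * M) d j = M d.symm j := by
  simp [Matrix.mul_apply, Prev]

def quantumWalkMatrix (G : SimpleGraph V) (s : ℝ) : Matrix G.Dart G.Dart ℝ :=
  s • ((Nout G)ᵀ * Nin G) - Prev G

lemma Prev_mul_Prev : Prev G * Prev G = 1 := by
  ext d e
  rw [Prev_mul_apply]
  simp [Prev, Matrix.one_apply, eq_comm]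

lemma quantumWalkMatrix_mul_self (s : ℝ) :
    quantumWalkMatrix G s * quantumWalkMatrix G s =
      s ^ 2 • ((Nout G)ᵀ * Nin G * ((Nout G)ᵀ * Nin G)) - s • ((Nout G)ᵀ * Nout G) -
        s • ((Nin G)ᵀ * Nin G) + 1 := by
  have hAP : (Nout G)ᵀ * Nin G * Prev G = (Nout G)ᵀ * Nout G := by
    ext d e
    rw [mul_Prev_apply, transpose_Nout_mul_apply, transpose_Nout_mul_apply]
    simp [Nin, Nout]
  have hPA : Prev G * ((Nout G)ᵀ * Nin G) = (Nin G)ᵀ * Nin G := by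
    ext d e
    rw [Prev_mul_apply, transpose_Nout_mul_apply, transpose_Nin_mul_apply]
    simp [Nin]
  simp only [quantumWalkMatrix, Matrix.sub_mul, Matrix.mul_sub, Matrix.smul_mul,
    Matrix.mul_smul, hAP, hPA, Prev_mul_Prev]
  module

lemma transpose_Nout_mul_Nin_mul_self_apply (d e : G.Dart) :
    ((Nout G)ᵀ * Nin G * ((Nout G)ᵀ * Nin G)) d e = if G.Adj d.fst e.snd then 1 else 0 := by
  rw [Matrix.mul_assoc, ← Matrix.mul_assoc (Nin G), Nin_mul_transpose_Nout,
    transpose_Nout_mul_apply, mul_Nin_apply, adjMatrix_apply]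

lemma incidence_combination_apply (a b c : ℝ) (d e : G.Dart) :
    (a • ((Nout G)ᵀ * Nin G * ((Nout G)ᵀ * Nin G)) - b • ((Nout G)ᵀ * Nout G) -
        b • ((Nin G)ᵀ * Nin G) + c • (1 : Matrix G.Dart G.Dart ℝ)) d e =
      if d = e then a - 2 * b + c
      else if d.fst = e.fst ∨ d.snd = e.snd then a - b
      else if G.Adj d.fst e.snd then a else 0 := by
  simp only [Matrix.add_apply, Matrix.sub_apply, Matrix.smul_apply, smul_eq_mul,
    transpose_Nout_mul_Nin_mul_self_apply, transpose_Nout_mul_Nout_apply,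
    transpose_Nin_mul_Nin_apply, one_apply]
  by_cases hde : d = e
  · subst hde
    simp only [if_true, Dart.adj]
    ring
  by_cases hfst : d.fst = e.fst
  · have hsnd : d.snd ≠ e.snd := fun h => hde (Dart.ext _ _ (Prod.ext hfst h))
    simp [hde, hfst, hsnd]
  by_cases hsnd : d.snd = e.snd
  · have hadj : G.Adj d.fst e.snd := hsnd ▸ d.adj
    simp [hde, hfst, hsnd, hadj]
  simp [hde, hfst, hsnd]

lemma quantumWalkMatrix_mul_self_apply (s : ℝ) (d e : G.Dart) :
    (quantumWalkMatrix G s * quantumWalkMatrix G s) d e =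
      if d = e then (1 - s) ^ 2
      else if d.fst = e.fst ∨ d.snd = e.snd then s * (s - 1)
      else if G.Adj d.fst e.snd then s ^ 2 else 0 := by
  rw [quantumWalkMatrix_mul_self, ← one_smul ℝ (1 : Matrix G.Dart G.Dart ℝ),
    incidence_combination_apply]
  split_ifs <;> ring

variable {s : ℝ}

lemma quantumWalkMatrix_mul_self_apply_neg_iff (hs0 : 0 < s) (hs1 : s < 1) (d e : G.Dart) :
    (quantumWalkMatrix G s * quantumWalkMatrix G s) d e < 0 ↔
      (d.snd = e.snd ∧ d.fst ≠ e.fst) ∨ (d.fst = e.fst ∧ d.snd ≠ e.snd) := by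
  have h1 : 0 < (1 - s) ^ 2 := by nlinarith
  have h2 : s * (s - 1) < 0 := mul_neg_of_pos_of_neg hs0 (by linarith)
  have h3 : 0 < s ^ 2 := by positivity
  rw [quantumWalkMatrix_mul_self_apply]
  split_ifs with hde hfs hadj
  · subst hde
    simp [h1.not_gt]
  · have hne : ¬(d.fst = e.fst ∧ d.snd = e.snd) := fun h =>
      hde (Dart.ext _ _ (Prod.ext h.1 h.2))
    exact iff_of_true h2 (by tauto)
  · exact iff_of_false h3.not_gt (by tauto)
  · exact iff_of_false (lt_irrefl 0) (by tauto)

lemma posSupport_quantumWalkMatrix_mul_self (hs0 : 0 < s) (hs1 : s < 1) :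
    posSupport (quantumWalkMatrix G s * quantumWalkMatrix G s) =
      (Nout G)ᵀ * Nin G * ((Nout G)ᵀ * Nin G) - (Nout G)ᵀ * Nout G - (Nin G)ᵀ * Nin G +
        (2 : ℝ) • 1 := by
  ext d e
  have h := incidence_combination_apply (G := G) 1 1 2 d e
  simp only [one_smul] at h
  rw [posSupport, of_apply, quantumWalkMatrix_mul_self_apply, h]
  have h1 : 0 < (1 - s) ^ 2 := by nlinarith
  have h2 : s * (s - 1) < 0 := mul_neg_of_pos_of_neg hs0 (by linarith)
  have h3 : 0 < s ^ 2 := by positivity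
  split_ifs <;> linarith

end SimpleGraph

theorem stmt17_general (G : SimpleGraph V) [DecidableRel G.Adj] (k : ℕ) (hk : 2 < k)
    (U : Matrix G.Dart G.Dart ℝ)
    (hU : U = (2 / (k : ℝ)) • ((Nout G)ᵀ * Nin G) - Prev G) :
    posSupport (U * U) =
        ((Nout G)ᵀ * Nin G) * ((Nout G)ᵀ * Nin G) - (Nout G)ᵀ * Nout G -
          (Nin G)ᵀ * Nin G + (2 : ℝ) • 1 ∧
      ∀ d e : G.Dart, (U * U) d e < 0 ↔
        ((d.snd = e.snd ∧ d.fst ≠ e.fst) ∨ (d.fst = e.fst ∧ d.snd ≠ e.snd)) := by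
  have hk' : (2 : ℝ) < k := by exact_mod_cast hk
  have hs0 : 0 < 2 / (k : ℝ) := div_pos two_pos (by linarith)
  have hs1 : 2 / (k : ℝ) < 1 := (div_lt_one (by linarith)).2 hk'
  subst hU
  exact ⟨SimpleGraph.posSupport_quantumWalkMatrix_mul_self hs0 hs1,
    SimpleGraph.quantumWalkMatrix_mul_self_apply_neg_iff hs0 hs1⟩

/-- For k > 2, S⁺(U²) = (N_out^T N_in)² - N_out^T N_out - N_in^T N_in + 2I, and the
negative entries of U² occur exactly at pairs of arcs with the same tail but different
heads, or the same head but different tails. -/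
theorem stmt17 (G : SimpleGraph V) [DecidableRel G.Adj] (k : ℕ) (hk : 2 < k)
    (hreg : G.IsRegularOfDegree k)
    (U : Matrix G.Dart G.Dart ℝ)
    (hU : U = (2 / (k : ℝ)) • ((Nout G)ᵀ * Nin G) - Prev G) :
    posSupport (U * U) =
        ((Nout G)ᵀ * Nin G) * ((Nout G)ᵀ * Nin G) - (Nout G)ᵀ * Nout G -
          (Nin G)ᵀ * Nin G + (2 : ℝ) • 1 ∧
      ∀ d e : G.Dart, (U * U) d e < 0 ↔
        ((d.snd = e.snd ∧ d.fst ≠ e.fst) ∨ (d.fst = e.fst ∧ d.snd ≠ e.snd)) :=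
  stmt17_general G k hk U hU
end
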